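/- arXiv:2603.13332 — 2 statements merged into one kernel-verified Lean document; each statement's English description precedes it below -/
import Mathlib

section
/- Let a, b, w₀ ∈ ℂ, let U ⊆ ℂ be open, and let s : U → ℂ be differentiable with 5s(z)⁴ − 3a·s(z)² + 2ib·s(z) + z = 0 and 20s(z)³ − 6a·s(z) + 2ib ≠ 0 for all z ∈ U. Define χ(z) = (−2a/5)s(z)³ + (3ib/5)s(z)² + (4z/5)s(z) + w₀. Then χ′(z) = s(z) for all z ∈ U. -/
open Complex Filter Topology

/-!
Differentiating the quartic identity `5s⁴ − 3as² + 2ibs + z = 0` gives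
`(20s³ − 6as + 2ib) s′ = −1`. Differentiating `χ` gives `(−6as²/5 + 6ibs/5 + 4z/5) s′ + 4s/5`,
and the bracket is `−s/5` times `20s³ − 6as + 2ib` plus `4/5` times the quartic (which vanishes),
so `χ′ = s/5 + 4s/5 = s`.
-/

variable {a b c z : ℂ} {s : ℂ → ℂ}

theorem HasDerivAt.swallowtail_quartic (hs : HasDerivAt s c z) :
    HasDerivAt (fun w => 5 * s w ^ 4 - 3 * a * s w ^ 2 + 2 * I * b * s w + w)
      ((20 * s z ^ 3 - 6 * a * s z + 2 * I * b) * c + 1) z := by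
  refine (((((hs.pow 4).const_mul 5).sub ((hs.pow 2).const_mul (3 * a))).add
    (hs.const_mul (2 * I * b))).add (hasDerivAt_id z)).congr_deriv ?_
  push_cast
  ring

theorem swallowtail_quartic_root_implicit_deriv (hs : HasDerivAt s c z)
    (hroot : ∀ᶠ w in 𝓝 z, 5 * s w ^ 4 - 3 * a * s w ^ 2 + 2 * I * b * s w + w = 0) :
    (20 * s z ^ 3 - 6 * a * s z + 2 * I * b) * c + 1 = 0 :=
  hs.swallowtail_quartic.unique ((hasDerivAt_const z 0).congr_of_eventuallyEq hroot)

theorem HasDerivAt.swallowtail_singulant (w₀ : ℂ) (hs : HasDerivAt s c z) :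
    HasDerivAt
      (fun w => (-2 * a / 5) * s w ^ 3 + (3 * I * b / 5) * s w ^ 2 + (4 * w / 5) * s w + w₀)
      ((-6 * a / 5 * s z ^ 2 + 6 * I * b / 5 * s z + 4 * z / 5) * c + 4 / 5 * s z) z := by
  have hlin : HasDerivAt (fun w : ℂ => 4 * w / 5) (4 / 5) z := by
    simpa using ((hasDerivAt_id z).const_mul (4 : ℂ)).div_const 5
  refine (((((hs.pow 3).const_mul _).add ((hs.pow 2).const_mul _)).add (hlin.mul hs)).add
    (hasDerivAt_const z w₀)).congr_deriv ?_
  push_cast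
  ring

theorem swallowtail_singulant_antiderivative_general (a b w₀ : ℂ) (U : Set ℂ)
    (hU : IsOpen U) (s : ℂ → ℂ)
    (hdiff : ∀ z ∈ U, DifferentiableAt ℂ s z)
    (hroot : ∀ z ∈ U, 5 * (s z)^4 - 3 * a * (s z)^2 + 2 * I * b * (s z) + z = 0)
    (χ : ℂ → ℂ)
    (hχ : ∀ z, χ z = (-2 * a / 5) * (s z)^3 + (3 * I * b / 5) * (s z)^2
        + (4 * z / 5) * (s z) + w₀) :
    ∀ z ∈ U, deriv χ z = s z := by
  intro z hz
  have hs := (hdiff z hz).hasDerivAt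
  have himplicit :=
    swallowtail_quartic_root_implicit_deriv hs (eventually_of_mem (hU.mem_nhds hz) hroot)
  rw [funext hχ, (hs.swallowtail_singulant w₀).deriv]
  linear_combination (-s z / 5) * himplicit + (4 * deriv s z / 5) * hroot z hz

/-- the closed-form singulant is an antiderivative of a
differentiable simple-root branch of the characteristic quartic. -/
theorem swallowtail_singulant_antiderivative (a b w₀ : ℂ) (U : Set ℂ)
    (hU : IsOpen U) (s : ℂ → ℂ)
    (hdiff : ∀ z ∈ U, DifferentiableAt ℂ s z)
    (hroot : ∀ z ∈ U, 5 * (s z)^4 - 3 * a * (s z)^2 + 2 * I * b * (s z) + z = 0)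
    (hsimple : ∀ z ∈ U, 20 * (s z)^3 - 6 * a * (s z) + 2 * I * b ≠ 0)
    (χ : ℂ → ℂ)
    (hχ : ∀ z, χ z = (-2 * a / 5) * (s z)^3 + (3 * I * b / 5) * (s z)^2
        + (4 * z / 5) * (s z) + w₀) :
    ∀ z ∈ U, deriv χ z = s z :=
  swallowtail_singulant_antiderivative_general a b w₀ U hU s hdiff hroot χ hχ
end

section
/- Define linear maps T₁,…,T₈ : ℂ⁴ → ℂ⁴ acting on (σ₁, σ₂, σ₃, σ₄) by: T₁ : σ₂ ↦ σ₂ − σ₁; T₂ : σ₃ ↦ σ₃ + σ₄; T₃ : σ₃ ↦ σ₃ + σ₂; T₄ : (σ₃, σ₄) ↦ (σ₃ + σ₁, σ₄ + σ₂); T₅ : σ₄ ↦ σ₄ + σ₁; T₆ : σ₂ ↦ σ₂ + σ₁; T₇ : σ₃ ↦ σ₃ − σ₄; T₈ : σ₄ ↦ σ₄ − σ₂ (coordinates not mentioned are unchanged, and in T₄ the updates use the incoming values of σ₁ and σ₂). Then the composition T₈ ∘ T₇ ∘ T₆ ∘ T₅ ∘ T₄ ∘ T₃ ∘ T₂ ∘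 T₁ is the identity on ℂ⁴. -/
/-- the eight Stokes automorphisms around the six-fold Stokes
crossing point compose to the identity (monodromy consistency). -/
theorem swallowtail_sixfold_crossing_monodromy
    (T₁ T₂ T₃ T₄ T₅ T₆ T₇ T₈ : ℂ × ℂ × ℂ × ℂ → ℂ × ℂ × ℂ × ℂ)
    (hT₁ : ∀ σ₁ σ₂ σ₃ σ₄ : ℂ, T₁ (σ₁, σ₂, σ₃, σ₄) = (σ₁, σ₂ - σ₁, σ₃, σ₄))
    (hT₂ : ∀ σ₁ σ₂ σ₃ σ₄ : ℂ, T₂ (σ₁, σ₂, σ₃, σ₄) = (σ₁, σ₂, σ₃ + σ₄, σ₄))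
    (hT₃ : ∀ σ₁ σ₂ σ₃ σ₄ : ℂ, T₃ (σ₁, σ₂, σ₃, σ₄) = (σ₁, σ₂, σ₃ + σ₂, σ₄))
    (hT₄ : ∀ σ₁ σ₂ σ₃ σ₄ : ℂ, T₄ (σ₁, σ₂, σ₃, σ₄) = (σ₁, σ₂, σ₃ + σ₁, σ₄ + σ₂))
    (hT₅ : ∀ σ₁ σ₂ σ₃ σ₄ : ℂ, T₅ (σ₁, σ₂, σ₃, σ₄) = (σ₁, σ₂, σ₃, σ₄ + σ₁))
    (hT₆ : ∀ σ₁ σ₂ σ₃ σ₄ : ℂ, T₆ (σ₁, σ₂, σ₃, σ₄) = (σ₁, σ₂ + σ₁, σ₃, σ₄))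
    (hT₇ : ∀ σ₁ σ₂ σ₃ σ₄ : ℂ, T₇ (σ₁, σ₂, σ₃, σ₄) = (σ₁, σ₂, σ₃ - σ₄, σ₄))
    (hT₈ : ∀ σ₁ σ₂ σ₃ σ₄ : ℂ, T₈ (σ₁, σ₂, σ₃, σ₄) = (σ₁, σ₂, σ₃, σ₄ - σ₂)) :
    T₈ ∘ T₇ ∘ T₆ ∘ T₅ ∘ T₄ ∘ T₃ ∘ T₂ ∘ T₁ = id := by
  funext p
  obtain ⟨a,b,c,d⟩ := p
  simp only [Function.comp_apply, hT₁, hT₂, hT₃, hT₄, hT₅, hT₆, hT₇, hT₈, id]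
  ring_nf
end
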